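/- Let K=(AP,W,δ,μ,v0) be a finite Kripke structure, ρ, ρ' be two tracks over K with ρ ∼k ρ', and ρ̄ be a track over K. If (lst(ρ),fst(ρ̄)) ∈ δ, then ρ·ρ̄ ∼k ρ'·ρ̄; and if (lst(ρ̄),fst(ρ)) ∈ δ, then ρ̄·ρ ∼k ρ̄·ρ'. -/

import Mathlib

open Classical

universe u v

structure KripkeStructure (AP : Type u) (W : Type v) where
  delta : W → W → Prop
  leftTotal : ∀ w, ∃ w', delta w w'
  mu : W → Set AP
  init : W

variable {AP : Type u} {W : Type v}

/-- A track over a Kripke structure: a finite sequence of at least two states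
respecting the transition relation. -/
def IsTrack (K : KripkeStructure AP W) (ρ : List W) : Prop :=
  2 ≤ ρ.length ∧ ρ.Chain' K.delta

/-- `σ` is a proper prefix (of length at least 2) of `ρ`, i.e. `σ ∈ Pref(ρ)`. -/
def ProperPrefix (σ ρ : List W) : Prop :=
  σ <+: ρ ∧ σ ≠ ρ ∧ 2 ≤ σ.length

/-- `σ` is a proper suffix (of length at least 2) of `ρ`, i.e. `σ ∈ Suff(ρ)`. -/
def ProperSuffix (σ ρ : List W) : Prop :=
  σ <:+ ρ ∧ σ ≠ ρ ∧ 2 ≤ σ.length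

/-- A descriptor element: (initial state, set of internal states, final state). -/
abbrev DescEl (W : Type v) : Type v := W × Set W × W

noncomputable def headW [Nonempty W] (ρ : List W) : W :=
  ρ.headD (Classical.arbitrary W)

noncomputable def lastW [Nonempty W] (ρ : List W) : W :=
  ρ.getLastD (Classical.arbitrary W)

/-- The set of internal states of a track. -/
def intStates (ρ : List W) : Set W := {w | w ∈ (ρ.drop 1).dropLast}

/-- The descriptor element associated with a track. -/
noncomputable def descEl [Nonempty W] (ρ : List W) : DescEl W :=
  (headW ρ, intStates ρ, lastW ρ)

/-- The type of B_k-descriptors (trees of depth `k` represented hereditarily as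
sets of subtrees, which identifies isomorphic descriptors). -/
def BDesc (W : Type v) : ℕ → Type v
  | 0 => DescEl W
  | k + 1 => DescEl W × Set (BDesc W k)

/-- The B_k-descriptor of a track: the root is labelled by the descriptor element of
the track and, for `k > 0`, the subtrees of the root are exactly (one copy each)
the B_(k-1)-descriptors of the proper prefixes of the track. Two tracks are
k-descriptor equivalent (`ρ ∼k ρ'`) iff `bDesc k ρ = bDesc k ρ'`. -/
noncomputable def bDesc [Nonempty W] : (k : ℕ) → List W → BDesc W k
  | 0, ρ => descEl ρ
  | k + 1, ρ => (descEl ρ, {d | ∃ σ, ProperPrefix σ ρ ∧ d = bDesc k σ})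

/-! The descriptor element of `ρ ++ b` (resp. `b ++ ρ`) is computed from that of `ρ` and from
`b` alone, which settles `k = 0`. For `k + 1`, a proper prefix of `ρ ++ b` is a proper prefix
of `ρ` (matched by a prefix of `ρ'`, as `ρ ∼(k+1) ρ'`), `ρ` itself (matched by `ρ'`, as
`∼(k+1)` refines `∼k`), or `ρ ++ τ` for a nonempty proper prefix `τ` of `b` (matched by
`ρ' ++ τ` by induction). A proper prefix of `b ++ ρ` is a prefix of `b`, `b` followed by the
common first state of `ρ` and `ρ'`, or `b ++ σ` for a proper prefix `σ` of `ρ`, matched by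
induction with `b ++ σ'` where `σ'` is a prefix of `ρ'` matching `σ`. -/

theorem prefix_append_cases {α : Type*} {σ x b : List α} (h : σ <+: x ++ b) :
    σ <+: x ∨ ∃ τ, τ ≠ [] ∧ τ <+: b ∧ σ = x ++ τ := by
  rcases le_or_gt σ.length x.length with hle | hlt
  · exact Or.inl (List.prefix_of_prefix_length_le h (List.prefix_append x b) hle)
  · obtain ⟨τ, rfl⟩ := List.prefix_of_prefix_length_le (List.prefix_append x b) h hlt.le
    refine Or.inr ⟨τ, ?_, (List.prefix_append_right_inj x).mp h, rfl⟩
    rintro rfl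
    simp at hlt

theorem properPrefix_append_of_prefix {σ ρ b : List W} (h : σ <+: ρ) (hσ : 2 ≤ σ.length)
    (hb : b ≠ []) : ProperPrefix σ (ρ ++ b) := by
  refine ⟨h.trans (List.prefix_append ρ b), fun e => hb ?_, hσ⟩
  have := h.length_le
  rw [← List.length_eq_zero_iff]
  simp only [e, List.length_append] at this
  omega

theorem properPrefix_append_append {b τ ρ : List W} (h : τ <+: ρ) (hne : τ ≠ ρ)
    (hlen : 2 ≤ b.length + τ.length) : ProperPrefix (b ++ τ) (b ++ ρ) :=
  ⟨(List.prefix_append_right_inj b).mpr h, fun e => hne (List.append_cancel_left e),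
    by simpa using hlen⟩

theorem ne_nil_of_two_le_length {ρ : List W} (h : 2 ≤ ρ.length) : ρ ≠ [] := by
  rintro rfl
  simp at h

theorem intStates_append {a b : List W} (ha : a ≠ []) (hb : b ≠ []) :
    intStates (a ++ b) = {w | w ∈ a.tail} ∪ {w | w ∈ b.dropLast} := by
  ext w
  simp [intStates, List.drop_one, List.tail_append_of_ne_nil ha,
    List.dropLast_append_of_ne_nil hb]

section Descriptors

variable [Nonempty W]

theorem headW_append {a : List W} (b : List W) (ha : a ≠ []) : headW (a ++ b) = headW a := by
  cases a with
  | nil => contradiction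
  | cons x a => rfl

theorem lastW_append (a : List W) {b : List W} (hb : b ≠ []) : lastW (a ++ b) = lastW b := by
  simp [lastW, List.getLastD_eq_getLast?, List.getLast?_eq_some_getLast hb]

theorem take_one_eq_headW {ρ : List W} (hρ : ρ ≠ []) : ρ.take 1 = [headW ρ] := by
  cases ρ with
  | nil => contradiction
  | cons x ρ => rfl

theorem setOf_mem_tail {ρ : List W} (hρ : 2 ≤ ρ.length) :
    {w | w ∈ ρ.tail} = insert (lastW ρ) (intStates ρ) := by
  obtain ⟨a, c, t, rfl⟩ : ∃ a c t, ρ = a :: c :: t := by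
    match ρ, hρ with
    | a :: c :: t, _ => exact ⟨a, c, t, rfl⟩
  have hlast : lastW (a :: c :: t) = (c :: t).getLast (List.cons_ne_nil c t) := by
    simp [lastW, List.getLastD_eq_getLast?, List.getLast?_eq_some_getLast]
  ext w
  conv_lhs => rw [List.tail_cons, ← List.dropLast_append_getLast (List.cons_ne_nil c t)]
  simp [hlast, intStates, or_comm]

theorem setOf_mem_dropLast {ρ : List W} (hρ : 2 ≤ ρ.length) :
    {w | w ∈ ρ.dropLast} = insert (headW ρ) (intStates ρ) := by
  obtain ⟨a, c, t, rfl⟩ : ∃ a c t, ρ = a :: c :: t := by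
    match ρ, hρ with
    | a :: c :: t, _ => exact ⟨a, c, t, rfl⟩
  ext w
  simp [headW, intStates, List.dropLast_cons_of_ne_nil]

theorem descEl_append_right {ρ b : List W} (hρ : 2 ≤ ρ.length) (hb : b ≠ []) :
    descEl (ρ ++ b) =
      ((descEl ρ).1, insert (descEl ρ).2.2 (descEl ρ).2.1 ∪ {w | w ∈ b.dropLast}, lastW b) := by
  have hρ₀ := ne_nil_of_two_le_length hρ
  simp only [descEl, headW_append b hρ₀, intStates_append hρ₀ hb, setOf_mem_tail hρ,
    lastW_append ρ hb]

theorem descEl_append_left {ρ b : List W} (hρ : 2 ≤ ρ.length) (hb : b ≠ []) :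
    descEl (b ++ ρ) =
      (headW b, {w | w ∈ b.tail} ∪ insert (descEl ρ).1 (descEl ρ).2.1, (descEl ρ).2.2) := by
  have hρ₀ := ne_nil_of_two_le_length hρ
  simp only [descEl, headW_append ρ hb, intStates_append hb hρ₀, setOf_mem_dropLast hρ,
    lastW_append b hρ₀]

def PrefixSim (k : ℕ) (ρ ρ' : List W) : Prop :=
  ∀ σ, ProperPrefix σ ρ → ∃ σ', ProperPrefix σ' ρ' ∧ bDesc k σ = bDesc k σ'

theorem bDesc_succ_eq_iff {k : ℕ} {ρ ρ' : List W} :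
    bDesc (k + 1) ρ = bDesc (k + 1) ρ' ↔
      descEl ρ = descEl ρ' ∧ PrefixSim k ρ ρ' ∧ PrefixSim k ρ' ρ := by
  have subset_iff : ∀ x y : List W, {d | ∃ σ, ProperPrefix σ x ∧ d = bDesc k σ} ⊆
      {d | ∃ σ, ProperPrefix σ y ∧ d = bDesc k σ} ↔ PrefixSim k x y := by
    refine fun x y => ⟨fun h σ hσ => ?_, ?_⟩
    · obtain ⟨σ', hσ', e⟩ := h ⟨σ, hσ, rfl⟩
      exact ⟨σ', hσ', e⟩
    · rintro h d ⟨σ, hσ, rfl⟩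
      exact h σ hσ
  change (descEl ρ, _) = (descEl ρ', _) ↔ _
  rw [Prod.mk.injEq, Set.Subset.antisymm_iff, subset_iff, subset_iff]

theorem descEl_eq_of_bDesc_eq {k : ℕ} {ρ ρ' : List W} (h : bDesc k ρ = bDesc k ρ') :
    descEl ρ = descEl ρ' := by
  cases k with
  | zero => exact h
  | succ k => exact (bDesc_succ_eq_iff.mp h).1

theorem bDesc_eq_of_bDesc_succ_eq {k : ℕ} {ρ ρ' : List W}
    (h : bDesc (k + 1) ρ = bDesc (k + 1) ρ') : bDesc k ρ = bDesc k ρ' := by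
  induction k generalizing ρ ρ' with
  | zero => exact descEl_eq_of_bDesc_eq h
  | succ k ih =>
    obtain ⟨hd, hsim, hsim'⟩ := bDesc_succ_eq_iff.mp h
    have lower : ∀ {x y : List W}, PrefixSim (k + 1) x y → PrefixSim k x y := fun hxy σ hσ =>
      (hxy σ hσ).imp fun _ ⟨hσ', e⟩ => ⟨hσ', ih e⟩
    exact bDesc_succ_eq_iff.mpr ⟨hd, lower hsim, lower hsim'⟩

theorem PrefixSim.append_right {k : ℕ} {ρ ρ' b : List W} (hρ' : 2 ≤ ρ'.length) (hb : b ≠ [])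
    (hsim : PrefixSim k ρ ρ') (heq : bDesc k ρ = bDesc k ρ')
    (hext : ∀ τ, τ ≠ [] → bDesc k (ρ ++ τ) = bDesc k (ρ' ++ τ)) :
    PrefixSim k (ρ ++ b) (ρ' ++ b) := by
  rintro σ ⟨hpre, hne, hlen⟩
  rcases prefix_append_cases hpre with hσ | ⟨τ, hτ, hτb, rfl⟩
  · by_cases hσρ : σ = ρ
    · subst hσρ
      exact ⟨ρ', properPrefix_append_of_prefix (List.prefix_refl ρ') hρ' hb, heq⟩
    · obtain ⟨σ', ⟨hσ', -, hlen'⟩, e⟩ := hsim σ ⟨hσ, hσρ, hlen⟩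
      exact ⟨σ', properPrefix_append_of_prefix hσ' hlen' hb, e⟩
  · refine ⟨ρ' ++ τ, properPrefix_append_append hτb (fun e => hne (by rw [e])) ?_, hext τ hτ⟩
    have := List.length_pos_iff.mpr hτ
    omega

theorem bDesc_append_right_eq (k : ℕ) {ρ ρ' b : List W} (hρ : 2 ≤ ρ.length)
    (hρ' : 2 ≤ ρ'.length) (hb : b ≠ []) (h : bDesc k ρ = bDesc k ρ') :
    bDesc k (ρ ++ b) = bDesc k (ρ' ++ b) := by
  induction k generalizing b with
  | zero =>
    change descEl (ρ ++ b) = descEl (ρ' ++ b)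
    rw [descEl_append_right hρ hb, descEl_append_right hρ' hb, descEl_eq_of_bDesc_eq h]
  | succ k ih =>
    obtain ⟨hd, hsim, hsim'⟩ := bDesc_succ_eq_iff.mp h
    have hk := bDesc_eq_of_bDesc_succ_eq h
    refine bDesc_succ_eq_iff.mpr ⟨?_, hsim.append_right hρ' hb hk fun τ hτ => ih hτ hk,
      hsim'.append_right hρ hb hk.symm fun τ hτ => (ih hτ hk).symm⟩
    rw [descEl_append_right hρ hb, descEl_append_right hρ' hb, hd]

theorem PrefixSim.append_left {k : ℕ} {ρ ρ' b : List W} (hρ : 2 ≤ ρ.length)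
    (hρ' : 2 ≤ ρ'.length) (hb : b ≠ []) (hsim : PrefixSim k ρ ρ') (hhead : headW ρ = headW ρ')
    (hext : ∀ σ σ', 2 ≤ σ.length → 2 ≤ σ'.length → bDesc k σ = bDesc k σ' →
      bDesc k (b ++ σ) = bDesc k (b ++ σ')) :
    PrefixSim k (b ++ ρ) (b ++ ρ') := by
  rintro σ ⟨hpre, hne, hlen⟩
  rcases prefix_append_cases hpre with hσ | ⟨τ, hτ, hτρ, rfl⟩
  · exact ⟨σ, properPrefix_append_of_prefix hσ hlen (ne_nil_of_two_le_length hρ'), rfl⟩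
  have hτne : τ ≠ ρ := fun e => hne (by rw [e])
  have hb₁ := List.length_pos_iff.mpr hb
  by_cases hτlen : 2 ≤ τ.length
  · obtain ⟨τ', ⟨hτ', hne', hlen'⟩, e⟩ := hsim τ ⟨hτρ, hτne, hτlen⟩
    exact ⟨b ++ τ', properPrefix_append_append hτ' hne' (by omega), hext τ τ' hτlen hlen' e⟩
  -- a one-state prefix is the common first state of `ρ` and `ρ'`
  have hτ₁ : τ.length = 1 := by
    have := List.length_pos_iff.mpr hτ
    omega
  have hτρ' : τ = ρ'.take 1 := by
    rw [List.prefix_iff_eq_take.mp hτρ, hτ₁, take_one_eq_headW (ne_nil_of_two_le_length hρ),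
      hhead, take_one_eq_headW (ne_nil_of_two_le_length hρ')]
  refine ⟨b ++ τ, properPrefix_append_append (hτρ' ▸ List.take_prefix 1 ρ') ?_ (by omega), rfl⟩
  rintro rfl
  omega

theorem bDesc_append_left_eq (k : ℕ) {ρ ρ' b : List W} (hρ : 2 ≤ ρ.length)
    (hρ' : 2 ≤ ρ'.length) (hb : b ≠ []) (h : bDesc k ρ = bDesc k ρ') :
    bDesc k (b ++ ρ) = bDesc k (b ++ ρ') := by
  induction k generalizing ρ ρ' with
  | zero =>
    change descEl (b ++ ρ) = descEl (b ++ ρ')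
    rw [descEl_append_left hρ hb, descEl_append_left hρ' hb, descEl_eq_of_bDesc_eq h]
  | succ k ih =>
    obtain ⟨hd, hsim, hsim'⟩ := bDesc_succ_eq_iff.mp h
    have hhead : headW ρ = headW ρ' := congrArg Prod.fst hd
    refine bDesc_succ_eq_iff.mpr ⟨?_, hsim.append_left hρ hρ' hb hhead fun σ σ' hσ hσ' e =>
      ih hσ hσ' e, hsim'.append_left hρ' hρ hb hhead.symm fun σ σ' hσ hσ' e => ih hσ hσ' e⟩
    rw [descEl_append_left hρ hb, descEl_append_left hρ' hb, hd]

end Descriptors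

theorem extension_bDesc_general [Nonempty W] (K : KripkeStructure AP W) (k : ℕ)
    (ρ ρ' ρbar : List W)
    (hρ : IsTrack K ρ) (hρ' : IsTrack K ρ') (hbar : IsTrack K ρbar)
    (he : bDesc k ρ = bDesc k ρ') :
    (K.delta (lastW ρ) (headW ρbar) → bDesc k (ρ ++ ρbar) = bDesc k (ρ' ++ ρbar)) ∧
    (K.delta (lastW ρbar) (headW ρ) → bDesc k (ρbar ++ ρ) = bDesc k (ρbar ++ ρ')) := by
  have hbar₀ := ne_nil_of_two_le_length hbar.1
  exact ⟨fun _ => bDesc_append_right_eq k hρ.1 hρ'.1 hbar₀ he,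
    fun _ => bDesc_append_left_eq k hρ.1 hρ'.1 hbar₀ he⟩

/-- left and right extensions preserve k-descriptor equivalence. -/
theorem extension_bDesc [Fintype W] [Nonempty W] (K : KripkeStructure AP W) (k : ℕ)
    (ρ ρ' ρbar : List W)
    (hρ : IsTrack K ρ) (hρ' : IsTrack K ρ') (hbar : IsTrack K ρbar)
    (he : bDesc k ρ = bDesc k ρ') :
    (K.delta (lastW ρ) (headW ρbar) → bDesc k (ρ ++ ρbar) = bDesc k (ρ' ++ ρbar)) ∧
    (K.delta (lastW ρbar) (headW ρ) → bDesc k (ρbar ++ ρ) = bDesc k (ρbar ++ ρ')) :=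
  extension_bDesc_general K k ρ ρ' ρbar hρ hρ' hbar he
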